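/- arXiv:1711.02379 — 5 statements merged into one kernel-verified Lean document; each statement's English description precedes it below -/
import Mathlib

section
/- The map d ↦ (n, (n/2)^2/d - d, (n/2)^2/d + d) is a bijection between the set of divisors d of (n/2)^2 with d < n/2 and the set of pairs of positive integers (y, z) with n^2 + y^2 = z^2, for any even n > 2. -/
theorem stmt_4 (n : ℕ) (hn : Even n) (hn2 : 2 < n) :
    Set.BijOn (fun d : ℕ => ((n / 2) ^ 2 / d - d, (n / 2) ^ 2 / d + d))
      {d : ℕ | d ∣ (n / 2) ^ 2 ∧ d < n / 2}
      {p : ℕ × ℕ | 0 < p.1 ∧ 0 < p.2 ∧ n ^ 2 + p.1 ^ 2 = p.2 ^ 2} := by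
  obtain ⟨m, hm⟩ := hn
  have hmm : n = 2 * m := by omega
  have h2 : n / 2 = m := by omega
  have hm2 : 2 ≤ m := by omega
  rw [h2]
  have key : ∀ d ∈ {d : ℕ | d ∣ m ^ 2 ∧ d < m},
      0 < d ∧ d < m ^ 2 / d ∧ m ^ 2 / d * d = m ^ 2 := by
    rintro d ⟨hdvd, hlt⟩
    have hd0 : 0 < d := by
      rcases Nat.eq_zero_or_pos d with h | h
      · exfalso
        subst h
        have := Nat.eq_zero_of_zero_dvd hdvd
        nlinarith
      · exact h
    have he : m ^ 2 / d * d = m ^ 2 := Nat.div_mul_cancel hdvd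
    have hlt2 : d < m ^ 2 / d := by nlinarith
    exact ⟨hd0, hlt2, he⟩
  refine ⟨?_, ?_, ?_⟩
  · rintro d hd
    obtain ⟨hd0, hlt2, he⟩ := key d hd
    refine ⟨by simp; omega, by simp; omega, ?_⟩
    simp only
    obtain ⟨k, hk⟩ : ∃ k, m ^ 2 / d = d + k := ⟨m ^ 2 / d - d, by omega⟩
    rw [hk] at he ⊢
    rw [hmm]
    have hy : d + k - d = k := by omega
    rw [hy]
    nlinarith
  · rintro d1 hd1 d2 hd2 heq
    obtain ⟨h10, h1lt, h1e⟩ := key d1 hd1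
    obtain ⟨h20, h2lt, h2e⟩ := key d2 hd2
    simp only [Prod.mk.injEq] at heq
    omega
  · rintro ⟨y, z⟩ ⟨hy, hz, heq⟩
    simp only at heq hy hz
    rw [hmm] at heq
    have hzy : y < z := by nlinarith
    obtain ⟨k, hk⟩ : ∃ k, z = y + k := ⟨z - y, by omega⟩
    have hk0 : 0 < k := by omega
    subst hk
    have hmain : 4 * m ^ 2 = k ^ 2 + 2 * k * y := by nlinarith
    have hke : Even k := by
      rcases Nat.even_or_odd k with h | h
      · exact h
      · exfalso
        obtain ⟨j, hj⟩ := h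
        subst hj
        have hexp : (2 * j + 1) ^ 2 + 2 * (2 * j + 1) * y
            = 4 * (j * j + j + j * y) + 2 * y + 1 := by ring
        rw [hexp] at hmain
        omega
    obtain ⟨a, ha⟩ := hke
    have hk2 : k = 2 * a := by omega
    subst hk2
    have ha0 : 0 < a := by omega
    have hab : m ^ 2 = a * (a + y) := by nlinarith
    have halt : a < m := by nlinarith
    have hdiv : m ^ 2 / a = a + y := by
      rw [hab, Nat.mul_div_cancel_left _ ha0]
    exact ⟨a, ⟨⟨a + y, hab⟩, halt⟩, by simp [hdiv, Prod.ext_iff]; omega⟩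
end

section
/- For an odd integer n > 1 whose canonical factorization has exactly q distinct prime factors, the number of primitive Pythagorean triples (n, y, z) (i.e. with gcd(n, y, z) = 1 and n^2 + y^2 = z^2, y, z positive integers) equals 2^{q-1}. -/
/-!
A primitive triple `(n, y, z)` with `n` odd is the same as a factorisation `n² = d * e`
with `d = z - y < e = z + y` and `gcd d e = 1`, i.e. a unitary divisor `d` of `n²` with
`d < n² / d`. A unitary divisor of `m` is determined by its set of prime factors, which can be
any subset of those of `m`, so `m` has `2 ^ ω(m)` of them; for `m > 1` the involution
`d ↦ m / d` has no fixed point and swaps the ones below and above `√m`. Since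
`ω(n²) = ω(n) = q`, the count is `2 ^ (q - 1)`.
-/

open Finset

namespace Nat

def unitaryDivisors (m : ℕ) : Finset ℕ := {d ∈ m.divisors | Coprime d (m / d)}

variable {m d : ℕ}

theorem mem_unitaryDivisors :
    d ∈ m.unitaryDivisors ↔ (d ∣ m ∧ m ≠ 0) ∧ Coprime d (m / d) := by
  rw [unitaryDivisors, mem_filter, mem_divisors]

theorem factorization_eq_filter_of_mem_unitaryDivisors (hd : d ∈ m.unitaryDivisors) :
    d.factorization = m.factorization.filter (· ∈ d.primeFactors) := by
  obtain ⟨⟨hdm, hm⟩, hcop⟩ := mem_unitaryDivisors.1 hd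
  have hm_eq : m.factorization = d.factorization + (m / d).factorization := by
    rw [← factorization_mul (ne_zero_of_dvd_ne_zero hm hdm)
      (ne_zero_of_dvd_ne_zero hm (div_dvd_of_dvd hdm)), Nat.mul_div_cancel' hdm]
  ext p
  rw [Finsupp.filter_apply]
  split_ifs with hp
  · have hpe : ¬p ∣ m / d := fun hpe => (prime_of_mem_primeFactors hp).one_lt.ne'
      (eq_one_of_dvd_coprimes hcop (dvd_of_mem_primeFactors hp) hpe)
    rw [hm_eq, Finsupp.add_apply, factorization_eq_zero_of_not_dvd hpe, add_zero]
  · rwa [← support_factorization, Finsupp.notMem_support_iff] at hp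

theorem factorization_prod_pow_filter (m : ℕ) (s : Finset ℕ) :
    ((m.factorization.filter (· ∈ s)).prod (· ^ ·)).factorization =
      m.factorization.filter (· ∈ s) :=
  prod_pow_factorization_eq_self fun _ hp =>
    prime_of_mem_primeFactors (mem_filter.1 hp).1

theorem prod_pow_filter_mem_unitaryDivisors (hm : m ≠ 0) (s : Finset ℕ) :
    (m.factorization.filter (· ∈ s)).prod (· ^ ·) ∈ m.unitaryDivisors := by
  set d := (m.factorization.filter (· ∈ s)).prod (· ^ ·)
  have hd0 : d ≠ 0 := Finsupp.prod_ne_zero_iff.2 fun _ hp =>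
    pow_ne_zero _ (prime_of_mem_primeFactors (mem_filter.1 hp).1).ne_zero
  have hdm : d ∣ m := by
    rw [← factorization_le_iff_dvd hd0 hm, factorization_prod_pow_filter]
    intro p
    rw [Finsupp.filter_apply]
    split_ifs <;> simp
  have he0 : m / d ≠ 0 := ne_zero_of_dvd_ne_zero hm (div_dvd_of_dvd hdm)
  refine mem_unitaryDivisors.2 ⟨⟨hdm, hm⟩, (disjoint_primeFactors hd0 he0).1 ?_⟩
  rw [disjoint_left]
  intro p hpd hpe
  rw [← support_factorization, factorization_prod_pow_filter, Finsupp.support_filter] at hpd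
  rw [← support_factorization, factorization_div hdm, factorization_prod_pow_filter,
    Finsupp.mem_support_iff, Finsupp.tsub_apply, Finsupp.filter_apply,
    if_pos (mem_filter.1 hpd).2, tsub_self] at hpe
  exact hpe rfl

theorem card_unitaryDivisors (hm : m ≠ 0) : #m.unitaryDivisors = 2 ^ #m.primeFactors := by
  rw [← card_powerset]
  refine card_nbij' primeFactors (fun s => (m.factorization.filter (· ∈ s)).prod (· ^ ·))
    ?_ ?_ ?_ ?_
  · intro d hd
    exact mem_powerset.2 (primeFactors_mono (mem_unitaryDivisors.1 hd).1.1 hm)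
  · intro s _
    exact prod_pow_filter_mem_unitaryDivisors hm s
  · intro d hd
    dsimp only
    rw [← factorization_eq_filter_of_mem_unitaryDivisors hd, prod_factorization_pow_eq_self
      (ne_zero_of_dvd_ne_zero hm (mem_unitaryDivisors.1 hd).1.1)]
  · intro s hs
    rw [coe_powerset, Set.mem_preimage, Set.mem_powerset_iff, coe_subset] at hs
    dsimp only
    rw [← support_factorization, factorization_prod_pow_filter, Finsupp.support_filter,
      support_factorization, filter_mem_eq_inter, inter_eq_right.2 hs]

theorem div_mem_unitaryDivisors (hd : d ∈ m.unitaryDivisors) : m / d ∈ m.unitaryDivisors := by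
  obtain ⟨⟨hdm, hm⟩, hcop⟩ := mem_unitaryDivisors.1 hd
  refine mem_unitaryDivisors.2 ⟨⟨div_dvd_of_dvd hdm, hm⟩, ?_⟩
  rw [Nat.div_div_self hdm hm]
  exact hcop.symm

theorem ne_div_of_mem_unitaryDivisors (hm : m ≠ 1) (hd : d ∈ m.unitaryDivisors) :
    d ≠ m / d := by
  intro h
  obtain ⟨⟨hdm, -⟩, hcop⟩ := mem_unitaryDivisors.1 hd
  rw [← h, coprime_self] at hcop
  exact hm (by rw [← Nat.mul_div_cancel' hdm, ← h, hcop])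

theorem card_unitaryDivisors_filter_lt (hm : 1 < m) :
    #{d ∈ m.unitaryDivisors | d < m / d} = 2 ^ (#m.primeFactors - 1) := by
  have hswap :
      #{d ∈ m.unitaryDivisors | d < m / d} = #{d ∈ m.unitaryDivisors | ¬d < m / d} := by
    refine card_nbij' (m / ·) (m / ·) ?_ ?_ ?_ ?_
    · intro d hd
      simp only [mem_coe, mem_filter] at hd ⊢
      obtain ⟨hdU, hlt⟩ := hd
      rw [Nat.div_div_self (mem_unitaryDivisors.1 hdU).1.1 (by omega)]
      exact ⟨div_mem_unitaryDivisors hdU, hlt.not_gt⟩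
    · intro d hd
      simp only [mem_coe, mem_filter] at hd ⊢
      obtain ⟨hdU, hle⟩ := hd
      rw [Nat.div_div_self (mem_unitaryDivisors.1 hdU).1.1 (by omega)]
      exact ⟨div_mem_unitaryDivisors hdU,
        lt_of_le_of_ne (not_lt.1 hle) (ne_div_of_mem_unitaryDivisors hm.ne' hdU).symm⟩
    all_goals
      intro d hd
      exact Nat.div_div_self (mem_unitaryDivisors.1 (mem_filter.1 hd).1).1.1 (by omega)
  have hpos : 0 < #m.primeFactors := Finset.card_pos.2 (nonempty_primeFactors.2 hm)
  have htotal := card_filter_add_card_filter_not (s := m.unitaryDivisors) (fun d => d < m / d)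
  rw [← hswap, card_unitaryDivisors (by omega),
    ← Nat.two_pow_pred_add_two_pow_pred hpos] at htotal
  omega

theorem sq_add_sq_eq_sq_iff {n y z : ℕ} :
    n ^ 2 + y ^ 2 = z ^ 2 ↔ y ≤ z ∧ n ^ 2 = (z - y) * (z + y) := by
  rw [mul_comm, ← Nat.sq_sub_sq, ← Nat.pow_le_pow_iff_left two_ne_zero]
  omega

theorem coprime_sub_add_of_sq_add_sq {n y z : ℕ} (hn : Odd n) (h : n ^ 2 + y ^ 2 = z ^ 2)
    (hg : Nat.gcd n (Nat.gcd y z) = 1) : Coprime (z - y) (z + y) := by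
  obtain ⟨hyz, hn2⟩ := sq_add_sq_eq_sq_iff.1 h
  refine Nat.coprime_of_dvd fun p hp hpd hps => hp.not_dvd_one ?_
  have hpn : p ∣ n := hp.dvd_of_dvd_pow (hn2 ▸ dvd_mul_of_dvd_left hpd _)
  have hp2 : Coprime p 2 := (hn.of_dvd_nat hpn).coprime_two_right
  have hpy : p ∣ y := hp2.dvd_of_dvd_mul_left <| by
    rw [show 2 * y = (z + y) - (z - y) by omega]
    exact Nat.dvd_sub hps hpd
  have hpz : p ∣ z := hp2.dvd_of_dvd_mul_left <| by
    rw [show 2 * z = (z + y) + (z - y) by omega]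
    exact dvd_add hps hpd
  exact hg ▸ Nat.dvd_gcd hpn (Nat.dvd_gcd hpy hpz)

theorem coprime_of_coprime_sub_add {y z : ℕ} (h : Coprime (z - y) (z + y)) :
    Coprime y z :=
  Nat.coprime_of_dvd fun _ hp hpy hpz =>
    hp.not_dvd_one <| h ▸ Nat.dvd_gcd (Nat.dvd_sub hpz hpy) (dvd_add hpz hpy)

theorem ncard_primitive_pythagorean_eq {n : ℕ} (hn : Odd n) :
    {p : ℕ × ℕ | 0 < p.1 ∧ 0 < p.2 ∧ n ^ 2 + p.1 ^ 2 = p.2 ^ 2 ∧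
        Nat.gcd n (Nat.gcd p.1 p.2) = 1}.ncard =
      #{d ∈ (n ^ 2).unitaryDivisors | d < n ^ 2 / d} := by
  have hn0 : n ^ 2 ≠ 0 := pow_ne_zero _ (by rintro rfl; simp at hn)
  rw [← Set.ncard_coe_finset]
  refine Set.ncard_congr (fun p _ => p.2 - p.1) ?_ ?_ ?_
  · rintro ⟨y, z⟩ ⟨hy, -, h, hg⟩
    obtain ⟨-, hn2⟩ := sq_add_sq_eq_sq_iff.1 h
    have hd : 0 < z - y := pos_of_ne_zero fun h0 => hn0 (by rw [hn2, h0, zero_mul])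
    have he : n ^ 2 / (z - y) = z + y := by rw [hn2, Nat.mul_div_cancel_left _ hd]
    simp only [mem_coe, mem_filter, mem_unitaryDivisors, he]
    refine ⟨⟨⟨Dvd.intro _ hn2.symm, hn0⟩, coprime_sub_add_of_sq_add_sq hn h hg⟩, ?_⟩
    omega
  · rintro ⟨y, z⟩ ⟨y', z'⟩ ⟨-, -, h, -⟩ ⟨-, -, h', -⟩ (hd : z - y = z' - y')
    obtain ⟨hyz, hn2⟩ := sq_add_sq_eq_sq_iff.1 h
    obtain ⟨hyz', hn2'⟩ := sq_add_sq_eq_sq_iff.1 h'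
    have hd0 : 0 < z - y := pos_of_ne_zero fun h0 => hn0 (by rw [hn2, h0, zero_mul])
    have hsum : z + y = z' + y' :=
      Nat.eq_of_mul_eq_mul_left hd0 (by rw [← hn2, hd, ← hn2'])
    ext <;> dsimp only <;> omega
  · intro d hd
    simp only [mem_coe, mem_filter, mem_unitaryDivisors] at hd
    obtain ⟨⟨⟨hdm, -⟩, hcop⟩, hlt⟩ := hd
    have hde : d * (n ^ 2 / d) = n ^ 2 := Nat.mul_div_cancel' hdm
    obtain ⟨a, ha⟩ : Odd d := hn.pow.of_dvd_nat hdm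
    obtain ⟨b, hb⟩ : Odd (n ^ 2 / d) := hn.pow.of_dvd_nat (Nat.div_dvd_of_dvd hdm)
    have hsub : (b + a + 1) - (b - a) = d := by omega
    have hadd : (b + a + 1) + (b - a) = n ^ 2 / d := by omega
    -- `y = (e - d) / 2` and `z = (e + d) / 2` for `d = 2a + 1`, `e = 2b + 1`
    refine ⟨(b - a, b + a + 1), ⟨by omega, by omega, ?_, ?_⟩, hsub⟩
    · exact sq_add_sq_eq_sq_iff.2 ⟨by omega, by rw [hsub, hadd, hde]⟩
    · have hyz : Coprime (b - a) (b + a + 1) :=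
        coprime_of_coprime_sub_add (by rwa [hsub, hadd])
      simp only [hyz.gcd_eq_one, Nat.gcd_one_right]

end Nat

theorem stmt_9 (n : ℕ) (hn : Odd n) (hn1 : 1 < n) (q : ℕ)
    (hq : n.primeFactors.card = q) :
    {p : ℕ × ℕ | 0 < p.1 ∧ 0 < p.2 ∧ n ^ 2 + p.1 ^ 2 = p.2 ^ 2 ∧
        Nat.gcd n (Nat.gcd p.1 p.2) = 1}.ncard = 2 ^ (q - 1) := by
  rw [Nat.ncard_primitive_pythagorean_eq hn,
    Nat.card_unitaryDivisors_filter_lt (Nat.one_lt_pow two_ne_zero hn1),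
    Nat.primeFactors_pow n two_ne_zero, hq]
end

section
/- If n is a positive integer divisible by 4 and n/2 has exactly q distinct prime factors (including 2), then the number of primitive Pythagorean triples (n, y, z) with positive integers y, z, n^2 + y^2 = z^2, gcd(n, y, z) = 1 equals 2^{q-1}. -/
set_option maxHeartbeats 1000000

open Finset

lemma unitary_aux (m : ℕ) (hm : m ≠ 0) (S : Finset ℕ) (hS : S ⊆ m.primeFactors) :
    (∏ p ∈ S, p ^ m.factorization p) * (∏ p ∈ m.primeFactors \ S, p ^ m.factorization p) = m := by
  rw [mul_comm, Finset.prod_sdiff hS]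
  simpa [Finsupp.prod] using Nat.factorization_prod_pow_eq_self hm

lemma unitary_coprime (m : ℕ) (S T : Finset ℕ) (hS : S ⊆ m.primeFactors)
    (hT : T ⊆ m.primeFactors) (hd : Disjoint S T) :
    Nat.Coprime (∏ p ∈ S, p ^ m.factorization p) (∏ p ∈ T, p ^ m.factorization p) := by
  apply Nat.Coprime.prod_left
  intro p hp
  apply Nat.Coprime.prod_right
  intro r hr
  apply Nat.Coprime.pow
  rw [Nat.coprime_primes (Nat.prime_of_mem_primeFactors (hS hp))
    (Nat.prime_of_mem_primeFactors (hT hr))]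
  exact fun h => (Finset.disjoint_left.mp hd hp (h ▸ hr))

lemma unitary_primeFactors (m : ℕ) (hm : m ≠ 0) (S : Finset ℕ) (hS : S ⊆ m.primeFactors) :
    (∏ p ∈ S, p ^ m.factorization p).primeFactors = S := by
  ext p
  have hne : (∏ p ∈ S, p ^ m.factorization p) ≠ 0 := by
    apply Finset.prod_ne_zero_iff.mpr
    intro q hq
    exact pow_ne_zero _ (Nat.prime_of_mem_primeFactors (hS hq)).pos.ne'
  rw [Nat.mem_primeFactors]
  constructor
  · rintro ⟨hp, hdvd, -⟩
    obtain ⟨q, hq, hpq⟩ := (Nat.Prime.prime hp).exists_mem_finset_dvd hdvd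
    rcases Nat.eq_zero_or_pos (m.factorization q) with h0 | h0
    · simp [h0] at hpq; exact absurd (hpq ▸ hp) Nat.not_prime_one
    · have := (Nat.prime_dvd_prime_iff_eq hp (Nat.prime_of_mem_primeFactors (hS hq))).mp
        (hp.dvd_of_dvd_pow hpq)
      exact this ▸ hq
  · intro hp
    have hpp := Nat.prime_of_mem_primeFactors (hS hp)
    refine ⟨hpp, ?_, hne⟩
    have h1 : p ∣ p ^ m.factorization p :=
      dvd_pow_self _ (Nat.Prime.factorization_pos_of_dvd hpp hm
        (Nat.dvd_of_mem_primeFactors (hS hp))).ne'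
    exact h1.trans (Finset.dvd_prod_of_mem (fun q => q ^ m.factorization q) hp)

lemma unitary_count (m : ℕ) (hm : m ≠ 0) :
    (m.divisors.filter (fun d => Nat.Coprime d (m / d))).card = 2 ^ m.primeFactors.card := by
  rw [← Finset.card_powerset]
  refine (Finset.card_bij (fun S _ => ∏ p ∈ S, p ^ m.factorization p) ?_ ?_ ?_).symm
  · intro S hS
    rw [Finset.mem_powerset] at hS
    rw [Finset.mem_filter, Nat.mem_divisors]
    have key := unitary_aux m hm S hS
    have hdvd : (∏ p ∈ S, p ^ m.factorization p) ∣ m := ⟨_, key.symm⟩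
    have hpos : 0 < ∏ p ∈ S, p ^ m.factorization p := Nat.pos_of_dvd_of_pos hdvd hm.bot_lt
    have hdiv : m / (∏ p ∈ S, p ^ m.factorization p) = ∏ p ∈ m.primeFactors \ S, p ^ m.factorization p := by
      exact Nat.div_eq_of_eq_mul_right hpos key.symm
    refine ⟨⟨hdvd, hm⟩, ?_⟩
    rw [hdiv]
    exact unitary_coprime m _ _ hS (Finset.sdiff_subset) (Finset.disjoint_sdiff)
  · intro S hS T hT h
    rw [Finset.mem_powerset] at hS hT
    rw [← unitary_primeFactors m hm S hS, ← unitary_primeFactors m hm T hT]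
    rw [h]
  · intro d hd
    rw [Finset.mem_filter, Nat.mem_divisors] at hd
    obtain ⟨⟨hdvd, -⟩, hcop⟩ := hd
    have hd0 : d ≠ 0 := fun h => hm (by simpa [h] using Nat.eq_zero_of_zero_dvd (h ▸ hdvd))
    refine ⟨d.primeFactors, Finset.mem_powerset.mpr (Nat.primeFactors_mono hdvd hm), ?_⟩
    have : ∀ p ∈ d.primeFactors, p ^ m.factorization p = p ^ d.factorization p := by
      intro p hp
      congr 1
      have hmd : m = d * (m / d) := (Nat.div_mul_cancel hdvd).symm ▸ (Nat.mul_div_cancel' hdvd).symm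
      have h2 : (m / d).factorization p = 0 := by
        by_contra h
        have hpp := Nat.prime_of_mem_primeFactors hp
        have hpd : p ∣ m / d := Nat.dvd_of_mem_primeFactors
          (Nat.mem_primeFactors.mpr ⟨hpp, Nat.dvd_of_factorization_pos h, fun h0 => h (by simp [h0])⟩)
        have : p ∣ Nat.gcd d (m / d) := Nat.dvd_gcd (Nat.dvd_of_mem_primeFactors hp) hpd
        rw [hcop] at this
        exact hpp.one_lt.ne' (Nat.eq_one_of_dvd_one this)
      conv_lhs => rw [hmd, Nat.factorization_mul hd0 (fun h0 => hm (by rw [hmd, h0, mul_zero]))]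
      simp [h2]
    rw [Finset.prod_congr rfl this]
    conv_rhs => rw [← Nat.factorization_prod_pow_eq_self hd0]
    rfl

lemma half_count (a : ℕ) (ha2 : 2 ∣ a) (ha0 : a ≠ 0) :
    ((a ^ 2).divisors.filter (fun d => d < a ∧ Nat.Coprime d (a ^ 2 / d))).card
      = 2 ^ (a.primeFactors.card - 1) := by
  set m := a ^ 2 with hmdef
  have hm0 : m ≠ 0 := pow_ne_zero _ ha0
  have ha1 : 1 < a := lt_of_lt_of_le one_lt_two (Nat.le_of_dvd (Nat.pos_of_ne_zero ha0) ha2)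
  set F := m.divisors.filter (fun d => Nat.Coprime d (m / d)) with hF
  set T := m.divisors.filter (fun d => d < a ∧ Nat.Coprime d (m / d)) with hT
  set U := m.divisors.filter (fun d => a < d ∧ Nat.Coprime d (m / d)) with hU
  have hTU : T.card = U.card := by
    apply Finset.card_bij (fun d _ => m / d)
    · intro d hd
      rw [hT, Finset.mem_filter, Nat.mem_divisors] at hd
      obtain ⟨⟨hdvd, -⟩, hlt, hcop⟩ := hd
      have hd0 : 0 < d := Nat.pos_of_mem_divisors (by rw [Nat.mem_divisors]; exact ⟨hdvd, hm0⟩)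
      have hgt : a < m / d := by
        rcases Nat.lt_or_ge a (m / d) with h | h
        · exact h
        · exfalso
          have : m ≤ d * a := by
            calc m = d * (m / d) := (Nat.mul_div_cancel' hdvd).symm
            _ ≤ d * a := Nat.mul_le_mul_left _ h
          rw [hmdef, pow_two] at this
          nlinarith
      rw [hU, Finset.mem_filter, Nat.mem_divisors]
      refine ⟨⟨Nat.div_dvd_of_dvd hdvd, hm0⟩, hgt, ?_⟩
      rw [Nat.div_div_self hdvd hm0]
      exact hcop.symm
    · intro d hd e he h
      rw [hT, Finset.mem_filter, Nat.mem_divisors] at hd he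
      rw [← Nat.div_div_self hd.1.1 hm0, h, Nat.div_div_self he.1.1 hm0]
    · intro e he
      rw [hU, Finset.mem_filter, Nat.mem_divisors] at he
      obtain ⟨⟨hdvd, -⟩, hgt, hcop⟩ := he
      have he0 : 0 < e := lt_trans (Nat.pos_of_ne_zero ha0) hgt
      refine ⟨m / e, ?_, Nat.div_div_self hdvd hm0⟩
      rw [hT, Finset.mem_filter, Nat.mem_divisors]
      have hlt : m / e < a := by
        rw [Nat.div_lt_iff_lt_mul he0, hmdef, pow_two]
        exact (Nat.mul_lt_mul_left (Nat.pos_of_ne_zero ha0)).mpr hgt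
      refine ⟨⟨Nat.div_dvd_of_dvd hdvd, hm0⟩, hlt, ?_⟩
      rw [Nat.div_div_self hdvd hm0]
      exact hcop.symm
  have hFeq : F = T ∪ U := by
    ext d
    rw [hF, hT, hU, Finset.mem_union, Finset.mem_filter, Finset.mem_filter, Finset.mem_filter]
    constructor
    · rintro ⟨hdv, hcop⟩
      rcases lt_trichotomy d a with h | h | h
      · exact Or.inl ⟨hdv, h, hcop⟩
      · exfalso
        subst h
        have : d ^ 2 / d = d := by
          rw [pow_two, Nat.mul_div_cancel_left _ (Nat.pos_of_ne_zero ha0)]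
        rw [← hmdef] at this
        rw [this] at hcop
        have : d = 1 := by rwa [Nat.Coprime, Nat.gcd_self] at hcop
        omega
      · exact Or.inr ⟨hdv, h, hcop⟩
    · rintro (⟨hdv, -, hcop⟩ | ⟨hdv, -, hcop⟩) <;> exact ⟨hdv, hcop⟩
  have hdisj : Disjoint T U := by
    rw [Finset.disjoint_left]
    intro d hd hd'
    rw [hT, Finset.mem_filter] at hd
    rw [hU, Finset.mem_filter] at hd'
    omega
  have hq1 : 1 ≤ a.primeFactors.card := by
    have : 2 ∈ a.primeFactors := Nat.mem_primeFactors.mpr ⟨Nat.prime_two, ha2, ha0⟩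
    exact Finset.card_pos.mpr ⟨2, this⟩
  have hcount : F.card = 2 ^ a.primeFactors.card := by
    rw [hF, unitary_count m hm0, hmdef, Nat.primeFactors_pow a (by norm_num)]
  have key : 2 * T.card = 2 ^ a.primeFactors.card := by
    rw [← hcount, hFeq, Finset.card_union_of_disjoint hdisj, ← hTU]; ring
  obtain ⟨k, hk⟩ : ∃ k, a.primeFactors.card = k + 1 := ⟨_, (Nat.succ_pred_eq_of_pos hq1).symm⟩
  rw [hk] at key ⊢
  simp only [Nat.add_sub_cancel, pow_succ] at key ⊢
  omega

theorem stmt_11 (n : ℕ) (hn : 0 < n) (h4 : 4 ∣ n) (q : ℕ)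
    (hq : (n / 2).primeFactors.card = q) :
    {p : ℕ × ℕ | 0 < p.1 ∧ 0 < p.2 ∧ n ^ 2 + p.1 ^ 2 = p.2 ^ 2 ∧
        Nat.gcd n (Nat.gcd p.1 p.2) = 1}.ncard = 2 ^ (q - 1) := by
  obtain ⟨c, hc⟩ := h4
  set a := n / 2 with hadef
  have hna : n = 2 * a := by omega
  have ha2 : 2 ∣ a := ⟨c, by omega⟩
  have ha0 : a ≠ 0 := by omega
  have ha1 : 1 < a := by omega
  set T := (a ^ 2).divisors.filter (fun d => d < a ∧ Nat.Coprime d (a ^ 2 / d)) with hT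
  have hm0 : a ^ 2 ≠ 0 := pow_ne_zero _ ha0
  -- basic facts about members of T
  have Tfacts : ∀ d ∈ T, 0 < d ∧ d < a ∧ a < a ^ 2 / d ∧ d * (a ^ 2 / d) = a ^ 2 ∧
      Nat.Coprime d (a ^ 2 / d) := by
    intro d hd
    rw [hT, Finset.mem_filter, Nat.mem_divisors] at hd
    obtain ⟨⟨hdvd, -⟩, hlt, hcop⟩ := hd
    have hd0 : 0 < d := by
      rcases Nat.eq_zero_or_pos d with h | h
      · exact absurd (h ▸ hdvd) (by simpa using hm0)
      · exact h
    have hmul : d * (a ^ 2 / d) = a ^ 2 := Nat.mul_div_cancel' hdvd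
    have hgt : a < a ^ 2 / d := by
      by_contra h
      push_neg at h
      have : a ^ 2 ≤ d * a := hmul ▸ Nat.mul_le_mul_left d h
      nlinarith
    exact ⟨hd0, hlt, hgt, hmul, hcop⟩
  have hset : {p : ℕ × ℕ | 0 < p.1 ∧ 0 < p.2 ∧ n ^ 2 + p.1 ^ 2 = p.2 ^ 2 ∧
        Nat.gcd n (Nat.gcd p.1 p.2) = 1}
      = ↑(T.image (fun d => (a ^ 2 / d - d, a ^ 2 / d + d))) := by
    ext ⟨y, z⟩
    simp only [Set.mem_setOf_eq, Finset.coe_image, Set.mem_image, Finset.mem_coe, Prod.mk.injEq]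
    constructor
    · rintro ⟨hy, hz, heq, hg⟩
      -- y and z are odd
      have hyodd : ¬ 2 ∣ y := by
        intro h2y
        have h2z : 2 ∣ z := by
          have : 2 ∣ z ^ 2 := by
            rw [← heq]
            exact Nat.dvd_add (Dvd.dvd.pow (by omega) two_ne_zero) (Dvd.dvd.pow h2y two_ne_zero)
          exact Nat.Prime.dvd_of_dvd_pow Nat.prime_two this
        have : (2 : ℕ) ∣ 1 := hg ▸ Nat.dvd_gcd (by omega) (Nat.dvd_gcd h2y h2z)
        omega
      have hzy : y < z := by nlinarith
      have hzodd : ¬ 2 ∣ z := by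
        intro h2z
        have h2 : 2 ∣ y ^ 2 := by
          have hn2 : 2 ∣ n ^ 2 := Dvd.dvd.pow (by omega) two_ne_zero
          have : 2 ∣ z ^ 2 := Dvd.dvd.pow h2z two_ne_zero
          omega
        exact hyodd (Nat.Prime.dvd_of_dvd_pow Nat.prime_two h2)
      -- gcd y z = 1
      have hgyz : Nat.gcd y z = 1 := by
        have hdvd : Nat.gcd y z ∣ n ^ 2 := by
          have h1 : Nat.gcd y z ∣ z ^ 2 := (Nat.gcd_dvd_right y z).trans (dvd_pow_self z two_ne_zero)
          have h2 : Nat.gcd y z ∣ y ^ 2 := (Nat.gcd_dvd_left y z).trans (dvd_pow_self y two_ne_zero)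
          have : n ^ 2 = z ^ 2 - y ^ 2 := by omega
          rw [this]
          exact Nat.dvd_sub h1 h2
        have hcop : Nat.Coprime (n ^ 2) (Nat.gcd y z) := Nat.Coprime.pow_left _ hg
        have hone : Nat.gcd (n ^ 2) (Nat.gcd y z) = 1 := hcop
        have h3 : Nat.gcd y z ∣ 1 := hone ▸ Nat.dvd_gcd hdvd dvd_rfl
        exact Nat.dvd_one.mp h3
      -- define d, e
      obtain ⟨d, hd⟩ : 2 ∣ z - y := by omega
      obtain ⟨e, he⟩ : 2 ∣ z + y := by omega
      have hn2 : n ^ 2 = 4 * a ^ 2 := by rw [hna]; ring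
      have hze : z = y + 2 * d := by omega
      have hee : e = y + d := by omega
      have hexp : (y + 2 * d) ^ 2 = y ^ 2 + 4 * (d * y) + 4 * (d * d) := by ring
      have hexp2 : d * e = d * y + d * d := by rw [hee]; ring
      have heq2 : n ^ 2 + y ^ 2 = (y + 2 * d) ^ 2 := by rw [← hze]; exact heq
      have hde : d * e = a ^ 2 := by linarith [hn2, hexp, hexp2, heq2]
      have hd0 : 0 < d := by omega
      have hdlt : d < e := by omega
      have hda : d < a := by nlinarith [hde, hdlt, hd0]
      have hediv : a ^ 2 / d = e := by
        rw [← hde, Nat.mul_div_cancel_left _ hd0]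
      refine ⟨d, ?_, by omega, by omega⟩
      rw [hT, Finset.mem_filter, Nat.mem_divisors]
      refine ⟨⟨⟨e, hde.symm⟩, hm0⟩, hda, ?_⟩
      rw [hediv]
      -- gcd d e = 1
      have h1 : Nat.gcd d e ∣ y := by
        have : y = e - d := by omega
        rw [this]
        exact Nat.dvd_sub (Nat.gcd_dvd_right d e) (Nat.gcd_dvd_left d e)
      have h2 : Nat.gcd d e ∣ z := by
        have : z = e + d := by omega
        rw [this]
        exact Nat.dvd_add (Nat.gcd_dvd_right d e) (Nat.gcd_dvd_left d e)
      have := Nat.dvd_gcd h1 h2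
      rw [hgyz] at this
      exact Nat.dvd_one.mp this
    · rintro ⟨d, hd, hy, hz⟩
      obtain ⟨hd0, hda, hgt, hmul, hcop⟩ := Tfacts d hd
      obtain ⟨k, hk⟩ : ∃ k, a ^ 2 / d = k + d := ⟨a ^ 2 / d - d, by omega⟩
      rw [hk] at hy hz hgt hmul hcop
      have hy' : y = k := by omega
      have hz' : z = k + 2 * d := by omega
      subst hy' hz'
      have hn2 : n ^ 2 = 4 * a ^ 2 := by rw [hna]; ring
      have hcop1 : Nat.gcd d (y + d) = 1 := hcop
      have hkodd : ¬ 2 ∣ y := by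
        intro h2k
        have h2m : 2 ∣ d * (y + d) := by rw [hmul]; exact Dvd.dvd.pow ha2 two_ne_zero
        rcases (Nat.Prime.dvd_mul Nat.prime_two).mp h2m with h' | h'
        · have h2kd : 2 ∣ y + d := by omega
          have h1 : (2 : ℕ) ∣ 1 := by rw [← hcop1]; exact Nat.dvd_gcd h' h2kd
          omega
        · have h2d : 2 ∣ d := by omega
          have h1 : (2 : ℕ) ∣ 1 := by rw [← hcop1]; exact Nat.dvd_gcd h2d h'
          omega
      have hexp : (y + 2 * d) ^ 2 = y ^ 2 + 4 * (d * y) + 4 * (d * d) := by ring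
      have hmul' : d * y + d * d = a ^ 2 := by rw [← hmul]; ring
      refine ⟨by omega, by omega, by linarith [hn2, hexp, hmul'], ?_⟩
      set g := Nat.gcd y (y + 2 * d) with hgdef
      have h1 : g ∣ 2 * d := by
        have h : 2 * d = (y + 2 * d) - y := by omega
        rw [h]
        exact Nat.dvd_sub (Nat.gcd_dvd_right _ _) (Nat.gcd_dvd_left _ _)
      have h2 : g ∣ 2 * (y + d) := by
        have h : 2 * (y + d) = (y + 2 * d) + y := by ring
        rw [h]
        exact Nat.dvd_add (Nat.gcd_dvd_right _ _) (Nat.gcd_dvd_left _ _)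
      have h3 : g ∣ 2 := by
        have := Nat.dvd_gcd h1 h2
        rwa [Nat.gcd_mul_left, hcop1, mul_one] at this
      have hg1 : g = 1 := by
        rcases (Nat.dvd_prime Nat.prime_two).mp h3 with h | h
        · exact h
        · exact absurd (h ▸ Nat.gcd_dvd_left y (y + 2 * d)) hkodd
      rw [hg1, Nat.gcd_one_right]
  rw [hset, Set.ncard_coe_finset]
  rw [Finset.card_image_of_injOn]
  · rw [hT, half_count a ha2 ha0, hq]
  · intro d1 h1 d2 h2 h
    obtain ⟨hd1, hlt1, hgt1, -, -⟩ := Tfacts d1 h1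
    obtain ⟨hd2, hlt2, hgt2, -, -⟩ := Tfacts d2 h2
    simp only [Prod.mk.injEq] at h
    omega
end

section
/- Let n > 1 be odd and d a divisor of n^2 with d < n such that d is a perfect square. Then k = (n + d)/(2√d) and l = (n - d)/(2√d) are positive integers of opposite parity satisfying k^2 - l^2 = n and k^2 + l^2 = (n^2/d + d)/2. -/
theorem stmt_17 (n d : ℕ) (hn : Odd n) (hn1 : 1 < n) (hd : d ∣ n ^ 2) (hdn : d < n)
    (hsq : IsSquare d) :
    0 < (n + d) / (2 * Nat.sqrt d) ∧ 0 < (n - d) / (2 * Nat.sqrt d) ∧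
      ((n + d) / (2 * Nat.sqrt d)) ^ 2 = ((n - d) / (2 * Nat.sqrt d)) ^ 2 + n ∧
      ((n + d) / (2 * Nat.sqrt d)) ^ 2 + ((n - d) / (2 * Nat.sqrt d)) ^ 2 =
        (n ^ 2 / d + d) / 2 ∧
      (Even ((n + d) / (2 * Nat.sqrt d)) ↔ Odd ((n - d) / (2 * Nat.sqrt d))) := by
  obtain ⟨s, rfl⟩ := hsq
  have hs0 : 0 < s := by
    rcases Nat.eq_zero_or_pos s with h | h
    · subst h; simp at hd; omega
    · exact h
  have hsd : s ∣ n := by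
    have h2 : s ^ 2 ∣ n ^ 2 := by simpa [pow_two] using hd
    exact (Nat.pow_dvd_pow_iff (by norm_num)).mp h2
  obtain ⟨m, rfl⟩ := hsd
  rw [Nat.sqrt_eq]
  obtain ⟨hso, hmo⟩ := Nat.odd_mul.mp hn
  have hsm : s < m := lt_of_mul_lt_mul_left hdn (Nat.zero_le s)
  have hadd : s * m + s * s = s * (m + s) := by ring
  have hsub : s * m - s * s = s * (m - s) := (Nat.mul_sub s m s).symm
  have hk : (s * m + s * s) / (2 * s) = (m + s) / 2 := by
    rw [hadd, show 2 * s = s * 2 by ring, Nat.mul_div_mul_left _ _ hs0]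
  have hl : (s * m - s * s) / (2 * s) = (m - s) / 2 := by
    rw [hsub, show 2 * s = s * 2 by ring, Nat.mul_div_mul_left _ _ hs0]
  rw [hk, hl]
  obtain ⟨a, ha⟩ : Even (m + s) := by
    rcases hso with ⟨i, hi⟩; rcases hmo with ⟨j, hj⟩; exact ⟨i + j + 1, by omega⟩
  obtain ⟨b, hb⟩ : Even (m - s) := by
    rcases hso with ⟨i, hi⟩; rcases hmo with ⟨j, hj⟩; exact ⟨j - i, by omega⟩
  have hka : (m + s) / 2 = a := by omega
  have hlb : (m - s) / 2 = b := by omega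
  rw [hka, hlb]
  have hab : a = b + s := by omega
  have hm : m = 2 * b + s := by omega
  have hb0 : 0 < b := by omega
  have hd2 : (s * m) ^ 2 / (s * s) = m ^ 2 := by
    rw [show (s * m) ^ 2 = (s * s) * m ^ 2 by ring]
    exact Nat.mul_div_cancel_left _ (by positivity)
  refine ⟨by omega, hb0, ?_, ?_, ?_⟩
  · subst hab hm; ring
  · rw [hd2]
    have key : m ^ 2 + s * s = 2 * (a ^ 2 + b ^ 2) := by subst hab hm; ring
    omega
  · rcases hso with ⟨i, hi⟩
    constructor
    · rintro ⟨x, hx⟩; exact ⟨x - i - 1, by omega⟩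
    · rintro ⟨x, hx⟩; exact ⟨x + i + 1, by omega⟩
end

section
/- Let n be even, n > 2, and let d be a divisor of (n/2)^2 with d < n/2 of the form d = 2^{2a+1}·m^2 with m odd and a ≥ 0. Then k = (n + 2d)/(2√(2d)) and l = (n - 2d)/(2√(2d)) are positive integers of the same parity satisfying k^2 - l^2 = n. -/
theorem stmt_18 (n d : ℕ) (hn : Even n) (hn2 : 2 < n) (hd : d ∣ (n / 2) ^ 2)
    (hdn : d < n / 2) (hform : ∃ a m : ℕ, Odd m ∧ d = 2 ^ (2 * a + 1) * m ^ 2) :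
    0 < (n + 2 * d) / (2 * Nat.sqrt (2 * d)) ∧
      0 < (n - 2 * d) / (2 * Nat.sqrt (2 * d)) ∧
      ((n + 2 * d) / (2 * Nat.sqrt (2 * d))) ^ 2 =
        ((n - 2 * d) / (2 * Nat.sqrt (2 * d))) ^ 2 + n ∧
      (Even ((n + 2 * d) / (2 * Nat.sqrt (2 * d))) ↔
        Even ((n - 2 * d) / (2 * Nat.sqrt (2 * d)))) := by
  obtain ⟨a, m, hm, hdef⟩ := hform
  have hmpos : 0 < m := hm.pos
  set t := n / 2 with ht
  have htpos : 0 < t := by omega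
  set v := 2 ^ a * m with hv
  have hvpos : 0 < v := by positivity
  have hd2 : d = 2 * v ^ 2 := by
    rw [hdef, hv]; ring
  -- sqrt computation
  have hsqrt : Nat.sqrt (2 * d) = 2 * v := by
    have : 2 * d = (2 * v) * (2 * v) := by rw [hd2]; ring
    rw [this]; exact Nat.sqrt_eq _
  -- 2 * v divides t
  have hmt : m ∣ t := by
    have h1 : m ^ 2 ∣ t ^ 2 := dvd_trans ⟨2 ^ (2 * a + 1), by rw [hdef]; ring⟩ hd
    exact (Nat.pow_dvd_pow_iff two_ne_zero).mp h1
  have h2t : 2 ^ (a + 1) ∣ t := by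
    have h1 : 2 ^ (2 * a + 1) ∣ t ^ 2 := dvd_trans ⟨m ^ 2, hdef⟩ hd
    have ht2 : (t : ℕ) ^ 2 ≠ 0 := by positivity
    have hle : 2 * a + 1 ≤ (t ^ 2).factorization 2 :=
      (Nat.Prime.pow_dvd_iff_le_factorization Nat.prime_two ht2).mp h1
    rw [Nat.factorization_pow] at hle
    simp at hle
    exact (Nat.Prime.pow_dvd_iff_le_factorization Nat.prime_two htpos.ne').mpr (by omega)
  have hcop : Nat.Coprime (2 ^ (a + 1)) m := by
    apply Nat.Coprime.pow_left
    exact hm.coprime_two_left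
  have hst : 2 * v ∣ t := by
    have : 2 ^ (a + 1) * m ∣ t := hcop.mul_dvd_of_dvd_of_dvd h2t hmt
    have e : 2 * v = 2 ^ (a + 1) * m := by rw [hv]; ring
    rwa [e]
  obtain ⟨u, hu⟩ := hst
  have hn2t : n = 2 * t := (Nat.two_mul_div_two_of_even hn).symm
  have huv : v < u := by
    rw [hd2, hu] at hdn; nlinarith
  obtain ⟨w, hw⟩ : ∃ w, u = v + w := ⟨u - v, by omega⟩
  have hwpos : 0 < w := by omega
  have hn4 : n = 4 * v * (v + w) := by rw [hn2t, hu, hw]; ring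
  rw [hsqrt, hn4, hd2]
  have e1 : (4 * v * (v + w) + 2 * (2 * v ^ 2)) / (2 * (2 * v)) = 2 * v + w := by
    rw [show 4 * v * (v + w) + 2 * (2 * v ^ 2) = (2 * (2 * v)) * (2 * v + w) by ring,
      Nat.mul_div_cancel_left _ (by positivity)]
  have e2 : (4 * v * (v + w) - 2 * (2 * v ^ 2)) / (2 * (2 * v)) = w := by
    have h3 : 4 * v * (v + w) - 2 * (2 * v ^ 2) = (2 * (2 * v)) * w := by
      have h4 : 4 * v * (v + w) = 2 * (2 * v ^ 2) + (2 * (2 * v)) * w := by ring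
      omega
    rw [h3, Nat.mul_div_cancel_left _ (by positivity)]
  rw [e1, e2]
  refine ⟨by omega, hwpos, by ring, by simp [Nat.even_add, parity_simps]⟩
end
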